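/- A finite connected graph G is collapsible (equivalently, is a tree) if and only if there exists a discrete Morse function f : G → ℝ with N(G, f) = Σ_{σ critical}(−1)^{dim σ} h_f(σ) = 0. -/

import Mathlib

open Finset

variable {V : Type*}

/-- A finite abstract simplicial complex: a finite family of nonempty finite vertex sets
closed under passing to nonempty subsets. -/
def IsComplex [DecidableEq V] (K : Finset (Finset V)) : Prop :=
  (∀ σ ∈ K, σ.Nonempty) ∧ ∀ σ ∈ K, ∀ τ : Finset V, τ ⊆ σ → τ.Nonempty → τ ∈ K

/-- Dimension of a simplex. -/
def dimS (σ : Finset V) : ℕ := σ.card - 1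

/-- `σ` is an immediate face (facet) of `τ`. -/
def Facet [DecidableEq V] (σ τ : Finset V) : Prop := σ ⊆ τ ∧ σ.card + 1 = τ.card

instance [DecidableEq V] (σ τ : Finset V) : Decidable (Facet σ τ) := by
  unfold Facet; infer_instance

/-- A discrete (combinatorial) Morse function in the sense of Forman. -/
def IsMorse [DecidableEq V] {α : Type*} [LinearOrder α]
    (K : Finset (Finset V)) (f : Finset V → α) : Prop :=
  ∀ σ ∈ K,
    (K.filter (fun τ => Facet σ τ ∧ f τ ≤ f σ)).card ≤ 1 ∧
    (K.filter (fun ν => Facet ν σ ∧ f σ ≤ f ν)).card ≤ 1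

/-- Two discrete Morse functions are equivalent (induce the same gradient field). -/
def MorseEquiv [DecidableEq V] {α β : Type*} [LinearOrder α] [LinearOrder β]
    (K : Finset (Finset V)) (f : Finset V → α) (g : Finset V → β) : Prop :=
  ∀ σ ∈ K, ∀ τ ∈ K, Facet σ τ → (f σ < f τ ↔ g σ < g τ)

/-- A gradient pair of `f`. -/
def GradPair [DecidableEq V] (K : Finset (Finset V)) (f : Finset V → ℝ)
    (σ τ : Finset V) : Prop :=
  σ ∈ K ∧ τ ∈ K ∧ Facet σ τ ∧ f τ ≤ f σ

/-- The normalization `h_f` of a discrete Morse function `f`. -/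
noncomputable def normalization [DecidableEq V] (K : Finset (Finset V))
    (f : Finset V → ℝ) (σ : Finset V) : ℕ :=
  sInf {n : ℕ | ∃ g : Finset V → ℕ, IsMorse K g ∧ MorseEquiv K f g ∧ g σ = n}

/-- A critical simplex of `f`. -/
def IsCritical [DecidableEq V] {α : Type*} [LinearOrder α]
    (K : Finset (Finset V)) (f : Finset V → α) (σ : Finset V) : Prop :=
  σ ∈ K ∧ (∀ τ ∈ K, Facet σ τ → f σ < f τ) ∧ (∀ ν ∈ K, Facet ν σ → f ν < f σ)

instance [DecidableEq V] {α : Type*} [LinearOrder α]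
    (K : Finset (Finset V)) (f : Finset V → α) (σ : Finset V) :
    Decidable (IsCritical K f σ) := by
  unfold IsCritical; infer_instance

/-- The alternating sum of `h_f` over all simplices of `K`. -/
noncomputable def morseSum [DecidableEq V] (K : Finset (Finset V)) (f : Finset V → ℝ) : ℤ :=
  ∑ σ ∈ K, (-1 : ℤ) ^ (dimS σ) * (normalization K f σ : ℤ)

/-- The alternating sum of `h_f` over the critical simplices of `f`. -/
noncomputable def critSum [DecidableEq V] (K : Finset (Finset V)) (f : Finset V → ℝ) : ℤ :=
  ∑ σ ∈ K.filter (fun σ => IsCritical K f σ),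
    (-1 : ℤ) ^ (dimS σ) * (normalization K f σ : ℤ)

/-- Number of critical simplices of `f`. -/
noncomputable def numCritical [DecidableEq V] (K : Finset (Finset V)) (f : Finset V → ℝ) : ℕ :=
  (K.filter (fun σ => IsCritical K f σ)).card

/-- An optimal discrete Morse function minimizes the number of critical simplices. -/
def IsOptimal [DecidableEq V] (K : Finset (Finset V)) (f : Finset V → ℝ) : Prop :=
  IsMorse K f ∧ ∀ g : Finset V → ℝ, IsMorse K g → numCritical K f ≤ numCritical K g

/-- The invariant `𝔑(K)`: minimum of `|𝔑(K,f)|` over optimal Morse functions. -/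
noncomputable def NK [DecidableEq V] (K : Finset (Finset V)) : ℕ :=
  sInf {n : ℕ | ∃ f : Finset V → ℝ, IsOptimal K f ∧ n = (critSum K f).natAbs}

/-- An elementary collapse removing the free pair `(σ, τ)`. -/
def CollapseStep [DecidableEq V] (K K' : Finset (Finset V)) : Prop :=
  ∃ σ τ, σ ∈ K ∧ τ ∈ K ∧ Facet σ τ ∧ (∀ ρ ∈ K, σ ⊂ ρ → ρ = τ) ∧
    K' = (K.erase σ).erase τ

/-- Collapsibility: `K` collapses to a point by elementary collapses. -/
def Collapsible [DecidableEq V] (K : Finset (Finset V)) : Prop :=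
  ∃ v : V, Relation.ReflTransGen CollapseStep K {{v}}

/-- Connectivity of a complex. -/
def ComplexConnected [DecidableEq V] (K : Finset (Finset V)) : Prop :=
  K.Nonempty ∧ ∀ u v : V, {u} ∈ K → {v} ∈ K →
    Relation.ReflTransGen (fun a b => ({a, b} : Finset V) ∈ K) u v

/-- Signed incidence number `⟨∂τ, ν⟩` of an immediate face. -/
noncomputable def bsign [DecidableEq V] [LinearOrder V] (ν τ : Finset V) : ℝ :=
  if Facet ν τ then ∑ v ∈ τ \ ν, (-1 : ℝ) ^ ((τ.filter (fun u => u < v)).card) else 0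

/-- The simplicial boundary of a real chain `c` supported on `K`. -/
noncomputable def bnd [DecidableEq V] [LinearOrder V] (K : Finset (Finset V))
    (c : Finset V → ℝ) (ν : Finset V) : ℝ :=
  ∑ τ ∈ K, bsign ν τ * c τ

/-- A `k`-chain of `K`. -/
def IsChainOf (K : Finset (Finset V)) (k : ℕ) (c : Finset V → ℝ) : Prop :=
  ∀ τ, c τ ≠ 0 → τ ∈ K ∧ τ.card = k + 1

/-- `H₂(K; ℝ) = 0` for a complex of dimension `≤ 2`: every 2-cycle is zero. -/
def H2Zero [DecidableEq V] [LinearOrder V] (K : Finset (Finset V)) : Prop :=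
  ∀ c : Finset V → ℝ, IsChainOf K 2 c → (∀ ν, bnd K c ν = 0) → ∀ τ, c τ = 0

/-- `H₁(K; ℝ) = 0`: every 1-cycle is a boundary. -/
def H1Zero [DecidableEq V] [LinearOrder V] (K : Finset (Finset V)) : Prop :=
  ∀ c : Finset V → ℝ, IsChainOf K 1 c → (∀ ν, bnd K c ν = 0) →
    ∃ d : Finset V → ℝ, IsChainOf K 2 d ∧ ∀ ν, bnd K d ν = c ν

/-- Acyclicity (all reduced real homology vanishes) for a complex of dimension `≤ 2`. -/
def Acyclic [DecidableEq V] [LinearOrder V] (K : Finset (Finset V)) : Prop :=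
  ComplexConnected K ∧ H1Zero K ∧ H2Zero K

/-- Euler characteristic. -/
def eulerChar (K : Finset (Finset V)) : ℤ :=
  ∑ σ ∈ K, (-1 : ℤ) ^ (dimS σ)

/-- Gradient paths: `GPath K f σ₀ σᵣ p` says `p = [σ₀, τ₀, σ₁, τ₁, …, σᵣ]` is a gradient
path of `f` from `σ₀` to `σᵣ`. -/
inductive GPath [DecidableEq V] (K : Finset (Finset V)) (f : Finset V → ℝ) :
    Finset V → Finset V → List (Finset V) → Prop
  | nil : ∀ σ, σ ∈ K → GPath K f σ σ [σ]
  | cons : ∀ σ τ σ' e l, σ ∈ K → τ ∈ K → Facet σ τ → f τ ≤ f σ → Facet σ' τ → σ' ≠ σ →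
      GPath K f σ' e l → GPath K f σ e (σ :: τ :: l)

/-- Multiplicity (weight) of a gradient path, following Forman. -/
noncomputable def pweight [DecidableEq V] [LinearOrder V] : List (Finset V) → ℝ
  | σ :: τ :: rest => (-(bsign σ τ) * bsign rest.headI τ) * pweight rest
  | _ => 1

/-- The coefficient `λ^τ_σ` of `σ` in the Morse-complex boundary of `τ`. -/
noncomputable def morseCoeff [DecidableEq V] [LinearOrder V] (K : Finset (Finset V))
    (f : Finset V → ℝ) (τ σ : Finset V) : ℝ :=
  ∑ᶠ p ∈ {p : List (Finset V) | Facet p.headI τ ∧ GPath K f p.headI σ p},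
    bsign p.headI τ * pweight p

/-- One stellar subdivision step (at `σ`, with new vertex `v`). -/
def StellarStep (K K' : Finset (Finset ℕ)) : Prop :=
  ∃ σ v, σ ∈ K ∧ 2 ≤ σ.card ∧ (∀ τ ∈ K, v ∉ τ) ∧
    K' = K.filter (fun τ => ¬ σ ⊆ τ) ∪
      (K.filter (fun τ => σ ⊆ τ)).biUnion
        (fun τ => (σ.powerset.filter (fun μ => μ ≠ σ)).image
          (fun μ => insert v ((τ \ σ) ∪ μ)))

/-- Subdivisions (iterated stellar subdivisions). -/
def Subdivision (K L : Finset (Finset ℕ)) : Prop :=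
  Relation.ReflTransGen StellarStep K L

/-- `Ñ(K)`: the minimum of `𝔑(L)` over subdivisions `L` of `K`. -/
noncomputable def NtildeK (K : Finset (Finset ℕ)) : ℕ :=
  sInf {n : ℕ | ∃ L, Subdivision K L ∧ n = NK L}

/-! An elementary collapse can be run backwards on Morse functions: giving the removed free pair
`(σ, τ)` one common value above all others makes it a gradient pair and creates no critical
simplex, so a collapsible complex carries a Morse function whose only critical simplex is the
final vertex. Conversely, if no edge of a connected graph is critical, the vertex `v` of largest
value among those paired with an edge is a free face of its edge (a second edge at `v` would be
paired with a vertex of even larger value), and removing this pair leaves a connected graph with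
the same property. In a graph `𝔑(G, f) = -∑ h_f(e)` over the critical edges, because `h_f`
vanishes at critical vertices and `h_f(e) ≥ 1`, so `𝔑(G, f) = 0` exactly when no edge is
critical. -/

section

variable [DecidableEq V]

theorem Facet.ssubset {σ τ : Finset V} (h : Facet σ τ) : σ ⊂ τ :=
  Finset.ssubset_iff_subset_ne.2 ⟨h.1, fun he => by have := h.2; rw [he] at this; omega⟩

theorem facet_singleton_iff {w : V} {e : Finset V} : Facet {w} e ↔ w ∈ e ∧ e.card = 2 := by
  simp [Facet, eq_comm]

theorem Facet.exists_eq_singleton {ν e : Finset V} (h : Facet ν e) (he : e.card = 2) :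
    ∃ w ∈ e, ν = {w} := by
  obtain ⟨w, rfl⟩ := card_eq_one.1 (by have := h.2; omega : ν.card = 1)
  exact ⟨w, h.1 (mem_singleton_self w), rfl⟩

theorem exists_eq_pair_of_mem_of_card_eq_two {v : V} {e : Finset V} (hv : v ∈ e)
    (he : e.card = 2) : ∃ u, u ≠ v ∧ e = {v, u} := by
  obtain ⟨u, hu⟩ := card_eq_one.1 (by rw [card_erase_of_mem hv, he] : (e.erase v).card = 1)
  refine ⟨u, (mem_erase.1 (hu ▸ mem_singleton_self u)).1, ?_⟩
  rw [← insert_erase hv, hu]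

theorem IsComplex.card_pos {K : Finset (Finset V)} (hK : IsComplex K) {σ : Finset V}
    (hσ : σ ∈ K) : 0 < σ.card :=
  (hK.1 σ hσ).card_pos

theorem IsComplex.singleton_mem {K : Finset (Finset V)} (hK : IsComplex K) {e : Finset V}
    (he : e ∈ K) {w : V} (hw : w ∈ e) : {w} ∈ K :=
  hK.2 e he {w} (singleton_subset_iff.2 hw) (singleton_nonempty w)

end

def rankIn {α : Type*} [LinearOrder α] (s : Finset α) (x : α) : ℕ := #{y ∈ s | y < x}

theorem rankIn_lt_rankIn_iff {α : Type*} [LinearOrder α] {s : Finset α} {x y : α} (hx : x ∈ s) :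
    rankIn s x < rankIn s y ↔ x < y := by
  refine ⟨fun h => lt_of_not_ge fun hyx => h.not_ge ?_, fun hxy => card_lt_card ?_⟩
  · exact card_le_card fun z hz => by
      simp only [mem_filter] at hz ⊢
      exact ⟨hz.1, hz.2.trans_le hyx⟩
  · refine (ssubset_iff_of_subset fun z hz => ?_).2
      ⟨x, mem_filter.2 ⟨hx, hxy⟩, fun h => lt_irrefl x (mem_filter.1 h).2⟩
    simp only [mem_filter] at hz ⊢
    exact ⟨hz.1, hz.2.trans hxy⟩

section Morse

variable [DecidableEq V] {α β : Type*} [LinearOrder α] [LinearOrder β]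

theorem IsMorse.of_morseEquiv {K : Finset (Finset V)} {f : Finset V → α} {g : Finset V → β}
    (hf : IsMorse K f) (hfg : MorseEquiv K f g) : IsMorse K g := by
  intro σ hσ
  refine ⟨(card_le_card fun τ hτ => ?_).trans (hf σ hσ).1,
    (card_le_card fun ν hν => ?_).trans (hf σ hσ).2⟩
  · simp only [mem_filter] at hτ ⊢
    exact ⟨hτ.1, hτ.2.1, le_of_not_gt fun h => hτ.2.2.not_gt ((hfg σ hσ τ hτ.1 hτ.2.1).1 h)⟩
  · simp only [mem_filter] at hν ⊢
    exact ⟨hν.1, hν.2.1, le_of_not_gt fun h => hν.2.2.not_gt ((hfg ν hν.1 σ hσ hν.2.1).1 h)⟩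

theorem IsMorse.mono {A B : Finset (Finset V)} {f : Finset V → α} (hf : IsMorse A f)
    (hBA : B ⊆ A) : IsMorse B f := fun σ hσ =>
  ⟨(card_le_card (filter_subset_filter _ hBA)).trans (hf σ (hBA hσ)).1,
    (card_le_card (filter_subset_filter _ hBA)).trans (hf σ (hBA hσ)).2⟩

theorem IsMorse.eq_of_facet_of_le {K : Finset (Finset V)} {f : Finset V → α}
    (hf : IsMorse K f) {σ τ₁ τ₂ : Finset V} (hσ : σ ∈ K) (h₁ : τ₁ ∈ K) (h₂ : τ₂ ∈ K)
    (hστ₁ : Facet σ τ₁) (hστ₂ : Facet σ τ₂) (hle₁ : f τ₁ ≤ f σ) (hle₂ : f τ₂ ≤ f σ) :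
    τ₁ = τ₂ :=
  card_le_one.1 (hf σ hσ).1 _ (mem_filter.2 ⟨h₁, hστ₁, hle₁⟩) _ (mem_filter.2 ⟨h₂, hστ₂, hle₂⟩)

theorem exists_nat_morseEquiv {K : Finset (Finset V)} {f : Finset V → α} (hf : IsMorse K f) :
    ∃ g : Finset V → ℕ, IsMorse K g ∧ MorseEquiv K f g := by
  have hfg : MorseEquiv K f fun σ => rankIn (K.image f) (f σ) :=
    fun σ hσ _ _ _ => (rankIn_lt_rankIn_iff (mem_image_of_mem f hσ)).symm
  exact ⟨_, hf.of_morseEquiv hfg, hfg⟩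

theorem normalization_eq_zero_of_isCritical {K : Finset (Finset V)} {f : Finset V → ℝ}
    (hf : IsMorse K f) {σ : Finset V} (hcrit : IsCritical K f σ)
    (hmin : ∀ ν ∈ K, ¬ Facet ν σ) : normalization K f σ = 0 := by
  obtain ⟨g, -, hfg⟩ := exists_nat_morseEquiv hf
  -- shifting `g` up by one leaves room for the value `0` at `σ`
  let g' : Finset V → ℕ := fun ρ => if ρ = σ then 0 else g ρ + 1
  have hfg' : MorseEquiv K f g' := by
    intro ρ hρ τ hτ hρτ
    have hτσ : τ ≠ σ := by rintro rfl; exact hmin ρ hρ hρτ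
    by_cases hρσ : ρ = σ
    · subst hρσ
      simp [g', hτσ, hcrit.2.1 τ hτ hρτ]
    · simp [g', hρσ, hτσ, hfg ρ hρ τ hτ hρτ]
  exact Nat.sInf_eq_zero.2 (Or.inl ⟨g', hf.of_morseEquiv hfg', hfg', if_pos rfl⟩)

theorem normalization_pos {K : Finset (Finset V)} {f : Finset V → ℝ} (hf : IsMorse K f)
    {ν σ : Finset V} (hν : ν ∈ K) (hσ : σ ∈ K) (hνσ : Facet ν σ) (hlt : f ν < f σ) :
    0 < normalization K f σ := by
  obtain ⟨g, hg, hfg⟩ := exists_nat_morseEquiv hf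
  change 1 ≤ sInf _
  refine le_csInf ⟨g σ, g, hg, hfg, rfl⟩ ?_
  rintro _ ⟨g', -, hfg', rfl⟩
  exact Nat.zero_lt_of_lt ((hfg' ν hν σ hσ hνσ).1 hlt)

end Morse

section Graph

variable [DecidableEq V] {K : Finset (Finset V)} {f : Finset V → ℝ}

theorem not_isCritical_iff_exists_le (hK : IsComplex K) (hdim : ∀ σ ∈ K, σ.card ≤ 2)
    {e : Finset V} (he : e ∈ K) (hcard : e.card = 2) :
    ¬ IsCritical K f e ↔ ∃ w ∈ e, f e ≤ f {w} := by
  constructor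
  · intro hnc
    have hup : ∀ τ ∈ K, Facet e τ → f e < f τ := fun τ hτ h => by
      have := hdim τ hτ; have := h.2; omega
    obtain ⟨ν, hν, hνe, hle⟩ : ∃ ν ∈ K, Facet ν e ∧ f e ≤ f ν := by
      by_contra! hdown
      exact hnc ⟨he, hup, hdown⟩
    obtain ⟨w, hw, rfl⟩ := hνe.exists_eq_singleton hcard
    exact ⟨w, hw, hle⟩
  · rintro ⟨w, hw, hle⟩ hcrit
    exact hle.not_gt (hcrit.2.2 {w} (hK.singleton_mem he hw) (facet_singleton_iff.2 ⟨hw, hcard⟩))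

theorem critSum_eq_zero_iff (hK : IsComplex K) (hdim : ∀ σ ∈ K, σ.card ≤ 2)
    (hf : IsMorse K f) : critSum K f = 0 ↔ ∀ σ, IsCritical K f σ → σ.card = 1 := by
  have hcard : ∀ σ, IsCritical K f σ → σ.card = 1 ∨ σ.card = 2 := fun σ hσ => by
    have := hK.card_pos hσ.1; have := hdim σ hσ.1; omega
  have hvertex : ∀ σ, IsCritical K f σ → σ.card = 1 →
      (-1 : ℤ) ^ dimS σ * normalization K f σ = 0 := by
    intro σ hσ h1
    rw [normalization_eq_zero_of_isCritical hf hσ fun ν hν hνσ => by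
      have := hK.card_pos hν; have := hνσ.2; omega]
    simp
  have hedge : ∀ σ, IsCritical K f σ → σ.card = 2 →
      (-1 : ℤ) ^ dimS σ * normalization K f σ < 0 := by
    intro σ hσ h2
    obtain ⟨w, hw⟩ := hK.1 σ hσ.1
    have hwσ := facet_singleton_iff.2 ⟨hw, h2⟩
    have hpos := normalization_pos hf (hK.singleton_mem hσ.1 hw) hσ.1 hwσ
      (hσ.2.2 _ (hK.singleton_mem hσ.1 hw) hwσ)
    simp only [dimS, h2]
    omega
  rw [critSum, sum_eq_zero_iff_of_nonpos fun σ hσ => ?_]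
  · simp only [mem_filter]
    refine ⟨fun h σ hσ => (hcard σ hσ).resolve_right fun h2 => ?_,
      fun h σ hσ => hvertex σ hσ.2 (h σ hσ.2)⟩
    exact (hedge σ hσ h2).ne (h σ ⟨hσ.1, hσ⟩)
  · have hσ' := (mem_filter.1 hσ).2
    rcases hcard σ hσ' with h1 | h2
    exacts [(hvertex σ hσ' h1).le, (hedge σ hσ' h2).le]

end Graph

section Collapse

variable [DecidableEq V] {A B : Finset (Finset V)} {σ τ : Finset V}

theorem eq_or_eq_of_not_mem_erase_erase {ρ : Finset V} (hρ : ρ ∈ A)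
    (hρB : ρ ∉ (A.erase σ).erase τ) : ρ = σ ∨ ρ = τ := by
  simp only [mem_erase, not_and_or, not_not] at hρB
  tauto

theorem not_subset_of_mem_erase_erase (hfree : ∀ ρ ∈ A, σ ⊂ ρ → ρ = τ) {ρ : Finset V}
    (hρ : ρ ∈ (A.erase σ).erase τ) : ¬ σ ⊆ ρ := fun hσρ => by
  simp only [mem_erase] at hρ
  exact hρ.1 (hfree ρ hρ.2.2 (Finset.ssubset_iff_subset_ne.2 ⟨hσρ, Ne.symm hρ.2.1⟩))

theorem IsComplex.of_collapseStep (hA : IsComplex A) (hAB : CollapseStep A B) :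
    IsComplex B := by
  obtain ⟨σ, τ, -, -, hστ, hfree, rfl⟩ := hAB
  have hBA : (A.erase σ).erase τ ⊆ A := (erase_subset _ _).trans (erase_subset _ _)
  refine ⟨fun ρ hρ => hA.1 ρ (hBA hρ), fun ρ hρ μ hμρ hμ => ?_⟩
  have hσρ := not_subset_of_mem_erase_erase hfree hρ
  simp only [mem_erase]
  refine ⟨fun hμτ => hσρ ?_, fun hμσ => hσρ (hμσ ▸ hμρ), hA.2 ρ (hBA hρ) μ hμρ hμ⟩
  exact hστ.1.trans (hμτ ▸ hμρ)

theorem isMorse_ite_mem (hστ : Facet σ τ) (hfree : ∀ ρ ∈ A, σ ⊂ ρ → ρ = τ)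
    (hB : B = (A.erase σ).erase τ) {f' : Finset V → ℝ} (hf' : IsMorse B f') {c : ℝ}
    (hc : ∀ ρ ∈ B, f' ρ < c) : IsMorse A fun ρ => if ρ ∈ B then f' ρ else c := by
  set f : Finset V → ℝ := fun ρ => if ρ ∈ B then f' ρ else c
  have hlt : ∀ ρ₁ ρ₂, ρ₁ ∈ B → ρ₂ ∉ B → f ρ₁ < f ρ₂ := fun ρ₁ ρ₂ h₁ h₂ => by
    simpa [f, h₁, h₂] using hc ρ₁ h₁
  intro ρ hρ
  by_cases hρB : ρ ∈ B
  · refine ⟨(card_le_card fun t ht => ?_).trans (hf' ρ hρB).1,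
      (card_le_card fun ν hν => ?_).trans (hf' ρ hρB).2⟩
    · simp only [mem_filter] at ht ⊢
      have htB : t ∈ B := by_contra fun htB => (hlt ρ t hρB htB).not_ge ht.2.2
      simpa [f, hρB, htB] using ht.2
    · simp only [mem_filter] at hν ⊢
      have hνB : ν ∈ B := by_contra fun hνB => by
        refine not_subset_of_mem_erase_erase hfree (hB ▸ hρB) ?_
        rcases eq_or_eq_of_not_mem_erase_erase hν.1 (hB ▸ hνB) with rfl | rfl
        exacts [hν.2.1.1, hστ.1.trans hν.2.1.1]
      simpa [f, hρB, hνB] using hν.2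
  · have hρστ := eq_or_eq_of_not_mem_erase_erase hρ (hB ▸ hρB)
    refine ⟨(card_le_card (t := {τ}) fun t ht => ?_).trans (card_singleton τ).le,
      (card_le_card (t := {σ}) fun ν hν => ?_).trans (card_singleton σ).le⟩
    · simp only [mem_filter] at ht
      have hσρ : σ ⊆ ρ := by rcases hρστ with rfl | rfl; exacts [subset_rfl, hστ.1]
      exact mem_singleton.2 (hfree t ht.1 (hσρ.trans_ssubset ht.2.1.ssubset))
    · simp only [mem_filter] at hν
      have hνB : ν ∉ B := fun hνB => (hlt ν ρ hνB hρB).not_ge hν.2.2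
      rcases eq_or_eq_of_not_mem_erase_erase hν.1 (hB ▸ hνB) with hνσ | hντ
      · exact mem_singleton.2 hνσ
      · have hρτ : ρ ⊆ τ := by rcases hρστ with rfl | rfl; exacts [hστ.1, subset_rfl]
        exact absurd ((hντ ▸ hν.2.1.ssubset).trans_subset hρτ) (ssubset_irrefl τ)

theorem isCritical_of_isCritical_ite_mem (hσ : σ ∈ A) (hτ : τ ∈ A) (hστ : Facet σ τ)
    (hB : B = (A.erase σ).erase τ) {f' : Finset V → ℝ} {c : ℝ} {ρ : Finset V}
    (hcrit : IsCritical A (fun ρ => if ρ ∈ B then f' ρ else c) ρ) : IsCritical B f' ρ := by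
  have hσB : σ ∉ B := by simp [hB]
  have hτB : τ ∉ B := by simp [hB]
  have hρB : ρ ∈ B := by
    by_contra hρB
    rcases eq_or_eq_of_not_mem_erase_erase hcrit.1 (hB ▸ hρB) with rfl | rfl
    · simpa [hσB, hτB] using hcrit.2.1 τ hτ hστ
    · simpa [hσB, hτB] using hcrit.2.2 σ hσ hστ
  have hBA : B ⊆ A := hB ▸ (erase_subset _ _).trans (erase_subset _ _)
  refine ⟨hρB, fun t ht hρt => ?_, fun ν hν hνρ => ?_⟩
  · simpa [hρB, ht] using hcrit.2.1 t (hBA ht) hρt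
  · simpa [hρB, hν] using hcrit.2.2 ν (hBA hν) hνρ

theorem CollapseStep.exists_isMorse (hAB : CollapseStep A B) {f' : Finset V → ℝ}
    (hf' : IsMorse B f') :
    ∃ f : Finset V → ℝ, IsMorse A f ∧ ∀ ρ, IsCritical A f ρ → IsCritical B f' ρ := by
  obtain ⟨σ, τ, hσ, hτ, hστ, hfree, hB⟩ := hAB
  obtain ⟨M, hM⟩ := (B.image f').exists_le
  have hc : ∀ ρ ∈ B, f' ρ < M + 1 := fun ρ hρ => (hM _ (mem_image_of_mem f' hρ)).trans_lt
    (lt_add_one M)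
  exact ⟨_, isMorse_ite_mem hστ hfree hB hf' hc,
    fun ρ => isCritical_of_isCritical_ite_mem hσ hτ hστ hB⟩

theorem exists_isMorse_of_collapse {K : Finset (Finset V)} {v : V}
    (h : Relation.ReflTransGen CollapseStep K {{v}}) :
    ∃ f : Finset V → ℝ, IsMorse K f ∧ ∀ σ, IsCritical K f σ → σ = {v} := by
  induction h using Relation.ReflTransGen.head_induction_on with
  | refl =>
    refine ⟨0, fun σ _ => ⟨?_, ?_⟩, fun σ hσ => mem_singleton.1 hσ.1⟩ <;>
      exact (card_filter_le _ _).trans (card_singleton _).le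
  | head hstep _ ih =>
    obtain ⟨f', hf', hcrit'⟩ := ih
    obtain ⟨f, hf, hcrit⟩ := hstep.exists_isMorse hf'
    exact ⟨f, hf, fun σ hσ => hcrit' σ (hcrit σ hσ)⟩

end Collapse

section GraphCollapse

variable [DecidableEq V] {K : Finset (Finset V)}

theorem ComplexConnected.exists_eq_singleton (hconn : ComplexConnected K)
    (hvert : ∀ σ ∈ K, σ.card = 1) : ∃ x, K = {{x}} := by
  obtain ⟨σ, hσ⟩ := hconn.1
  obtain ⟨x, rfl⟩ := card_eq_one.1 (hvert σ hσ)
  refine ⟨x, eq_singleton_iff_unique_mem.2 ⟨hσ, fun ρ hρ => ?_⟩⟩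
  obtain ⟨y, rfl⟩ := card_eq_one.1 (hvert ρ hρ)
  have hpath := hconn.2 y x hρ hσ
  clear hρ hσ
  induction hpath with
  | refl => rfl
  | @tail b c _ hbc ih => rw [ih, card_le_one.1 (hvert _ hbc).le b (by simp) c (by simp)]

theorem ComplexConnected.erase_free_vertex (hK : IsComplex K) (hconn : ComplexConnected K)
    {u v : V} (huv : u ≠ v) (he : {v, u} ∈ K) (hfree : ∀ ρ ∈ K, {v} ⊂ ρ → ρ = {v, u}) :
    ComplexConnected ((K.erase {v}).erase {v, u}) := by
  set K' := (K.erase {v}).erase {v, u}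
  have hvK' : ∀ ρ ∈ K', v ∉ ρ := fun ρ hρ hv =>
    not_subset_of_mem_erase_erase hfree hρ (singleton_subset_iff.2 hv)
  have huK' : {u} ∈ K' := by
    simp only [K', mem_erase]
    refine ⟨fun h => ?_, fun h => huv (singleton_inj.1 h), hK.singleton_mem he (by simp)⟩
    simpa [huv.symm] using congrArg card h
  -- the only edge at `v` is `{v, u}`, so sending `v` to `u` turns paths in `K` into paths in `K'`
  let m : V → V := fun a => if a = v then u else a
  have hm : ∀ a b, ({a, b} : Finset V) ∈ K →
      Relation.ReflTransGen (fun a b => ({a, b} : Finset V) ∈ K') (m a) (m b) := by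
    intro a b hab
    by_cases hv : v ∈ ({a, b} : Finset V)
    · have hsub : ({a, b} : Finset V) ⊆ {v, u} := by
        rcases (singleton_subset_iff.2 hv).eq_or_ssubset with h | h
        · exact h ▸ singleton_subset_iff.2 (mem_insert_self v {u})
        · exact (hfree _ hab h).le
      have hmu : ∀ x ∈ ({v, u} : Finset V), m x = u := by simp [m]
      rw [hmu a (hsub (by simp)), hmu b (hsub (by simp))]
    · have ha : a ≠ v := fun h => hv (by simp [h])
      have hb : b ≠ v := fun h => hv (by simp [h])
      simp only [m, if_neg ha, if_neg hb]
      refine .single ?_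
      simp only [K', mem_erase]
      exact ⟨fun h => hv (h ▸ mem_insert_self v {u}), fun h => hv (h ▸ mem_singleton_self v), hab⟩
  refine ⟨⟨{u}, huK'⟩, fun x y hx hy => ?_⟩
  have hmx : m x = x := if_neg fun h : x = v => hvK' _ hx (by simp [h])
  have hmy : m y = y := if_neg fun h : y = v => hvK' _ hy (by simp [h])
  have hK'K : K' ⊆ K := (erase_subset _ _).trans (erase_subset _ _)
  simpa [Function.onFun, hmx, hmy] using
    Relation.ReflTransGen.lift' m hm _ _ (hconn.2 x y (hK'K hx) (hK'K hy))

theorem exists_free_vertex (hK : IsComplex K) (hdim : ∀ σ ∈ K, σ.card ≤ 2)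
    {f : Finset V → ℝ} (hf : IsMorse K f) (hpair : ∀ e ∈ K, e.card = 2 → ∃ w ∈ e, f e ≤ f {w})
    (hedge : ∃ e ∈ K, e.card = 2) :
    ∃ v u, u ≠ v ∧ {v, u} ∈ K ∧ ∀ ρ ∈ K, {v} ⊂ ρ → ρ = {v, u} := by
  set S := (K.filter (·.card = 2)).biUnion fun e => e.filter fun w => f e ≤ f {w}
  have hS : ∀ w, w ∈ S ↔ ∃ e ∈ K, e.card = 2 ∧ w ∈ e ∧ f e ≤ f {w} := by
    simp [S, and_assoc]
  obtain ⟨e₀, he₀, hc₀⟩ := hedge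
  obtain ⟨w₀, hw₀, hle₀⟩ := hpair e₀ he₀ hc₀
  obtain ⟨v, hvS, hvmax⟩ :=
    S.exists_max_image (fun w => f {w}) ⟨w₀, (hS w₀).2 ⟨e₀, he₀, hc₀, hw₀, hle₀⟩⟩
  obtain ⟨e, he, hec, hve, hle⟩ := (hS v).1 hvS
  have hfree : ∀ ρ ∈ K, {v} ⊂ ρ → ρ = e := by
    intro ρ hρ hvρ
    have hρc : ρ.card = 2 := by
      have := card_lt_card hvρ; have := hdim ρ hρ; rw [card_singleton] at *; omega
    by_contra hne
    have hlt : f {v} < f ρ := lt_of_not_ge fun h => hne <|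
      hf.eq_of_facet_of_le (hK.singleton_mem he hve) hρ he
        (facet_singleton_iff.2 ⟨singleton_subset_iff.1 hvρ.1, hρc⟩)
        (facet_singleton_iff.2 ⟨hve, hec⟩) h hle
    obtain ⟨w, hw, hρw⟩ := hpair ρ hρ hρc
    have := hvmax w ((hS w).2 ⟨ρ, hρ, hρc, hw, hρw⟩)
    linarith
  obtain ⟨u, huv, rfl⟩ := exists_eq_pair_of_mem_of_card_eq_two hve hec
  exact ⟨v, u, huv, he, hfree⟩

theorem collapsible_of_forall_exists_le (hK : IsComplex K) (hdim : ∀ σ ∈ K, σ.card ≤ 2)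
    (hconn : ComplexConnected K) {f : Finset V → ℝ} (hf : IsMorse K f)
    (hpair : ∀ e ∈ K, e.card = 2 → ∃ w ∈ e, f e ≤ f {w}) : Collapsible K := by
  induction hn : K.card using Nat.strong_induction_on generalizing K with
  | _ n ih =>
  by_cases hedge : ∃ e ∈ K, e.card = 2
  · obtain ⟨v, u, huv, he, hfree⟩ := exists_free_vertex hK hdim hf hpair hedge
    have hvK : {v} ∈ K := hK.singleton_mem he (mem_insert_self v {u})
    have hstep : CollapseStep K ((K.erase {v}).erase {v, u}) :=
      ⟨{v}, {v, u}, hvK, he, facet_singleton_iff.2 ⟨mem_insert_self v {u}, card_pair huv.symm⟩,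
        hfree, rfl⟩
    have hsub : (K.erase {v}).erase {v, u} ⊂ K :=
      (erase_subset _ _).trans_ssubset (erase_ssubset hvK)
    obtain ⟨x, hx⟩ := ih _ (hn ▸ card_lt_card hsub) (hK.of_collapseStep hstep)
      (fun σ hσ => hdim σ (hsub.1 hσ)) (hconn.erase_free_vertex hK huv he hfree)
      (hf.mono hsub.1) (fun e he => hpair e (hsub.1 he)) rfl
    exact ⟨x, .head hstep hx⟩
  · push Not at hedge
    obtain ⟨x, rfl⟩ := hconn.exists_eq_singleton fun σ hσ => by
      have := hK.card_pos hσ; have := hdim σ hσ; have := hedge σ hσ; omega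
    exact ⟨x, .refl⟩

end GraphCollapse

/-- A finite connected graph `G` is collapsible (i.e. a tree) iff some
discrete Morse function `f` on `G` has `𝔑(G,f) = 0`. -/
theorem graph_collapsible_iff_critSum_zero {V : Type*} [DecidableEq V]
    (G : Finset (Finset V)) (hG : IsComplex G) (hdim : ∀ σ ∈ G, σ.card ≤ 2)
    (hconn : ComplexConnected G) :
    Collapsible G ↔ ∃ f : Finset V → ℝ, IsMorse G f ∧ critSum G f = 0 := by
  constructor
  · rintro ⟨v, hv⟩
    obtain ⟨f, hf, hcrit⟩ := exists_isMorse_of_collapse hv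
    refine ⟨f, hf, (critSum_eq_zero_iff hG hdim hf).2 fun σ hσ => ?_⟩
    rw [hcrit σ hσ, card_singleton]
  · rintro ⟨f, hf, hzero⟩
    have hvert := (critSum_eq_zero_iff hG hdim hf).1 hzero
    refine collapsible_of_forall_exists_le hG hdim hconn hf fun e he hcard => ?_
    refine (not_isCritical_iff_exists_le hG hdim he hcard).1 fun hcrit => ?_
    have := hvert e hcrit
    omega
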